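/- arXiv:0804.1254 — 2 statements merged into one kernel-verified Lean document; each statement's English description precedes it below -/
import Mathlib

section
/- If u is an associative Lyndon-Shirshov word of length at least 2 over a linearly ordered alphabet, and x_β is the minimal letter occurring in u, then the word u·x_β (u with x_β appended) is also an associative Lyndon-Shirshov word. -/
open List

/-- The lexicographic order used by Shirshov: a word is *greater* than any of its
proper extensions (`w > w ++ t` for `t ≠ []`), and otherwise words are compared
letterwise by the order on the alphabet.  `LSLt u v` means `u < v`. -/
def LSLt {X : Type*} [LinearOrder X] : List X → List X → Prop
  | _ :: _, [] => True
  | [], _ => False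
  | a :: u, b :: v => a < b ∨ (a = b ∧ LSLt u v)

/-- `u ≤ v` in the Shirshov lexicographic order. -/
def LSLe {X : Type*} [LinearOrder X] (u v : List X) : Prop := u = v ∨ LSLt u v

/-- The degree-lexicographic order: compare first by length, then lexicographically. -/
def DegLt {X : Type*} [LinearOrder X] (u v : List X) : Prop :=
  u.length < v.length ∨ (u.length = v.length ∧ LSLt u v)

/-- `≤` in the degree-lexicographic order. -/
def DegLe {X : Type*} [LinearOrder X] (u v : List X) : Prop := u = v ∨ DegLt u v

/-- An associative Lyndon–Shirshov word: a nonempty word `u` such that `vw > wv`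
(lexicographically) for every factorization `u = vw` into nonempty parts. -/
def IsALSW {X : Type*} [LinearOrder X] (u : List X) : Prop :=
  u ≠ [] ∧ ∀ v w : List X, v ≠ [] → w ≠ [] → u = v ++ w → LSLt (w ++ v) (v ++ w)

section Aux
variable {X : Type*} [LinearOrder X]

theorem lslt_cons_cons {a b : X} {u v : List X} :
    LSLt (a :: u) (b :: v) ↔ a < b ∨ (a = b ∧ LSLt u v) := Iff.rfl

/-- Strong (positionwise) strict inequality. -/
def SLt (u v : List X) : Prop :=
  ∃ (p s t : List X) (a b : X), a < b ∧ u = p ++ a :: s ∧ v = p ++ b :: t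

theorem SLt.lslt {u v : List X} (h : SLt u v) : LSLt u v := by
  obtain ⟨p, s, t, a, b, hab, rfl, rfl⟩ := h
  induction p with
  | nil => exact Or.inl hab
  | cons c p ih => exact Or.inr ⟨rfl, ih⟩

theorem lslt_cases {u v : List X} (h : LSLt u v) :
    SLt u v ∨ ∃ t, t ≠ [] ∧ u = v ++ t := by
  induction u generalizing v with
  | nil => cases v <;> simp [LSLt] at h
  | cons a u ih =>
    cases v with
    | nil => exact Or.inr ⟨a :: u, by simp, rfl⟩
    | cons b v =>
      rcases lslt_cons_cons.1 h with h' | ⟨rfl, h'⟩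
      · exact Or.inl ⟨[], u, v, a, b, h', rfl, rfl⟩
      · rcases ih h' with ⟨p, s, t, c, d, hcd, rfl, rfl⟩ | ⟨t, ht, rfl⟩
        · exact Or.inl ⟨a :: p, s, t, c, d, hcd, rfl, rfl⟩
        · exact Or.inr ⟨t, ht, rfl⟩

theorem lslt_irrefl (u : List X) : ¬ LSLt u u := by
  induction u with
  | nil => simp [LSLt]
  | cons a u ih =>
    rintro (h | ⟨-, h⟩)
    · exact lt_irrefl _ h
    · exact ih h

theorem lslt_trans : ∀ {u v w : List X}, LSLt u v → LSLt v w → LSLt u w := by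
  intro u
  induction u with
  | nil => intro v w h1 _; cases v <;> simp [LSLt] at h1
  | cons a u ih =>
    intro v w h1 h2
    cases v with
    | nil => cases w <;> simp [LSLt] at h2
    | cons b v =>
      cases w with
      | nil => trivial
      | cons c w =>
        rcases lslt_cons_cons.1 h1 with h1' | ⟨rfl, h1'⟩ <;>
          rcases lslt_cons_cons.1 h2 with h2' | ⟨rfl, h2'⟩
        · exact Or.inl (lt_trans h1' h2')
        · exact Or.inl h1'
        · exact Or.inl h2'
        · exact Or.inr ⟨rfl, ih h1' h2'⟩
end Aux

section Aux2
variable {X : Type*} [LinearOrder X]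

/-- Every proper nonempty suffix of an ALSW is `LSLt` the word. -/
theorem suffix_lslt {u v w : List X} (hu : IsALSW u) (hv : v ≠ []) (hw : w ≠ [])
    (huvw : u = v ++ w) : LSLt w u := by
  have h := hu.2 v w hv hw huvw
  rcases lslt_cases h with ⟨p, s, t, a, b, hab, h1, h2⟩ | ⟨t, ht, hext⟩
  · -- strong inequality between w++v and v++w
    rcases le_or_gt (p.length + 1) w.length with hle | hlt
    · -- p ++ [a] is a prefix of w
      have hpw : p ++ [a] <+: w :=
        List.prefix_of_prefix_length_le (h1 ▸ ⟨s, by simp⟩)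
          (List.prefix_append w v) (by simpa using hle)
      obtain ⟨r, hr⟩ := hpw
      refine SLt.lslt ⟨p, r, t, a, b, hab, ?_, ?_⟩
      · rw [← hr]; simp
      · rw [huvw, h2]
    · -- w is a prefix of p : leads to a contradiction
      have hwp : w <+: p :=
        List.prefix_of_prefix_length_le (List.prefix_append w v)
          (h1 ▸ ⟨a :: s, rfl⟩) (by omega)
      obtain ⟨p', rfl⟩ := hwp
      have hv' : v = p' ++ a :: s := by
        have := h1; rw [List.append_assoc] at this
        exact List.append_cancel_left this
      have hu2 : u = w ++ (p' ++ b :: t) := by rw [huvw, h2, List.append_assoc]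
      have h3 := hu.2 w (p' ++ b :: t) hw (by simp) hu2
      have h4 : LSLt (v ++ w) ((p' ++ b :: t) ++ w) :=
        SLt.lslt ⟨p', s ++ w, t ++ w, a, b, hab, by simp [hv'], by simp⟩
      have h5 : LSLt (v ++ w) (v ++ w) := by
        have := lslt_trans h4 h3
        rwa [← hu2, huvw] at this
      exact absurd h5 (lslt_irrefl _)
  · -- w ++ v = (v ++ w) ++ t : impossible by lengths
    exfalso
    have := congrArg List.length hext
    simp at this
    exact ht (List.length_eq_zero_iff.1 (by omega))

/-- The first letter of an ALSW bounds every letter occurring after a nonempty prefix. -/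
theorem le_head_of_suffix {a y : X} {u₁ v s : List X} (hu : IsALSW (a :: u₁))
    (hv : v ≠ []) (hs : a :: u₁ = v ++ y :: s) : y ≤ a := by
  have h := suffix_lslt hu hv (by simp) hs
  rcases lslt_cases h with ⟨p, s', t, c, d, hcd, h1, h2⟩ | ⟨t, ht, hext⟩
  · cases p with
    | nil =>
      simp at h1 h2
      exact le_of_lt (h1.1 ▸ h2.1 ▸ hcd)
    | cons e p =>
      have hy : y = e := by simpa using congrArg (·.head?) h1
      have ha : a = e := by simpa using congrArg (·.head?) h2
      rw [hy, ha]
  · exfalso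
    have h1 := congrArg List.length hs
    have h2 := congrArg List.length hext
    simp at h1 h2
    have : v.length = 0 := by omega
    exact hv (List.length_eq_zero_iff.1 this)

end Aux2

/-- If `u` is an ALSW of length `≥ 2` and `x` is the minimal
letter occurring in `u`, then `u ++ [x]` is an ALSW. -/
theorem alsw_append_min_letter {X : Type*} [LinearOrder X]
    (u : List X) (hu : IsALSW u) (hlen : 2 ≤ u.length)
    (x : X) (hx : x ∈ u) (hmin : ∀ y ∈ u, x ≤ y) :
    IsALSW (u ++ [x]) := by
  obtain ⟨a, u₁, rfl⟩ : ∃ a u₁, u = a :: u₁ := by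
    cases u with
    | nil => simp at hlen
    | cons a u₁ => exact ⟨a, u₁, rfl⟩
  have hu₁ : u₁ ≠ [] := by
    intro h; rw [h] at hlen; simp at hlen
  -- every letter of a :: u₁ is ≤ a
  have hmax : ∀ y ∈ a :: u₁, y ≤ a := by
    intro y hy
    rcases List.mem_cons.1 hy with rfl | hy₁
    · exact le_refl _
    · obtain ⟨v', s', hvs⟩ := List.append_of_mem hy₁
      exact le_head_of_suffix hu (v := a :: v') (by simp) (by rw [hvs]; rfl)
  -- x < a
  have hxa : x < a := by
    rcases lt_or_eq_of_le (hmin a (by simp)) with h | h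
    · exact h
    · exfalso
      have hall : ∀ y ∈ a :: u₁, y = a := fun y hy =>
        le_antisymm (hmax y hy) (h ▸ hmin y hy)
      have h1 : u₁ ++ [a] = List.replicate (u₁.length + 1) a := by
        rw [List.eq_replicate_iff]
        refine ⟨by simp, fun b hb => ?_⟩
        rcases List.mem_append.1 hb with hb | hb
        · exact hall b (by simp [hb])
        · simpa using hb
      have h2 : (a : X) :: u₁ = List.replicate (u₁.length + 1) a := by
        rw [List.eq_replicate_iff]
        exact ⟨by simp, fun b hb => hall b hb⟩
      have h3 := hu.2 [a] u₁ (by simp) hu₁ rfl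
      rw [h1] at h3
      rw [show ([a] : List X) ++ u₁ = a :: u₁ from rfl, h2] at h3
      exact lslt_irrefl _ h3
  refine ⟨by simp, ?_⟩
  intro v w hv hw hvw
  obtain ⟨w₀, y, rfl⟩ : ∃ w₀ y, w = w₀ ++ [y] := by
    rcases List.eq_nil_or_concat w with h | ⟨w₀, y, h⟩
    · exact absurd h hw
    · exact ⟨w₀, y, by rw [h, List.concat_eq_append]⟩
  rw [← List.append_assoc] at hvw
  obtain ⟨huv, hxy⟩ := List.append_inj' hvw rfl
  have hyx : y = x := by simpa using hxy.symm
  subst hyx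
  cases w₀ with
  | nil =>
    obtain rfl : v = a :: u₁ := by simpa using huv.symm
    show LSLt (([] : List X) ++ [y] ++ (a :: u₁)) ((a :: u₁) ++ ([] ++ [y]))
    show LSLt (y :: (a :: u₁)) (a :: (u₁ ++ [y]))
    exact Or.inl hxa
  | cons c w₁ =>
    have hw₀ : (c :: w₁ : List X) ≠ [] := by simp
    have h := suffix_lslt hu hv hw₀ huv
    rcases lslt_cases h with ⟨p, s, t, e, d, hed, h1, h2⟩ | ⟨t, ht, hext⟩
    · refine SLt.lslt ⟨p, s ++ ([y] ++ v), t ++ [y], e, d, hed, ?_, ?_⟩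
      · rw [List.append_assoc, h1]; simp
      · rw [← List.append_assoc, ← huv, h2]; simp
    · exfalso
      have l1 := congrArg List.length huv
      have l2 := congrArg List.length hext
      have lv := List.length_pos_iff.2 hv
      have lt' := List.length_pos_iff.2 ht
      simp at l1 l2
      omega
end

section
/- In the free associative algebra k⟨X⟩ over a field k with X linearly ordered and X* ordered by the degree-lexicographic order, for every non-associative Lyndon-Shirshov word [u], the leading monomial of [u] (viewed as a noncommutative polynomial via the commutator bracket [a,b] = ab − ba) equals the underlying associative word u, with leading coefficient 1. -/
open List

/-- The underlying associative word of a non-associative word (binary bracketing). -/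
def wordOf {X : Type*} : FreeMagma X → List X
  | .of x => [x]
  | .mul a b => wordOf a ++ wordOf b

/-- `w` is the longest proper suffix of `u` which is an ALSW. -/
def LongestALSWProperSuffix {X : Type*} [LinearOrder X] (u w : List X) : Prop :=
  IsALSW w ∧ (∃ v : List X, v ≠ [] ∧ u = v ++ w) ∧
    ∀ w' : List X, IsALSW w' → (∃ v' : List X, v' ≠ [] ∧ u = v' ++ w') →
      w'.length ≤ w.length

/-- The standard (up-to-down) bracketing of an ALSW: `[x] = x` and
`[u] = [[v][w]]` where `w` is the longest proper ALSW suffix of `u`. -/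
inductive IsStdBracketing {X : Type*} [LinearOrder X] : List X → FreeMagma X → Prop
  | of (x : X) : IsStdBracketing [x] (.of x)
  | mul {v w : List X} {tv tw : FreeMagma X} :
      IsALSW (v ++ w) → LongestALSWProperSuffix (v ++ w) w →
      IsStdBracketing v tv → IsStdBracketing w tw →
      IsStdBracketing (v ++ w) (tv * tw)

/-- A non-associative Lyndon–Shirshov word, via Shirshov's conditions:
the underlying word is an ALSW, both halves are NLSWs, and the right factor of
the left half is `≤` the right half. -/
inductive IsNLSW {X : Type*} [LinearOrder X] : FreeMagma X → Prop
  | of (x : X) : IsNLSW (.of x)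
  | mul {tv tw : FreeMagma X} :
      IsNLSW tv → IsNLSW tw → IsALSW (wordOf (tv * tw)) →
      (∀ t₁ t₂ : FreeMagma X, tv = t₁ * t₂ → LSLe (wordOf t₂) (wordOf tw)) →
      IsNLSW (tv * tw)

/-- The free associative algebra `k⟨X⟩`, realized as the monoid algebra of the
free monoid on `X`. -/
abbrev FreeAssocAlg (k X : Type*) [Field k] := MonoidAlgebra k (FreeMonoid X)

/-- The monomial of `k⟨X⟩` corresponding to a word `u ∈ X*`. -/
noncomputable def monom (k : Type*) [Field k] {X : Type*} (u : List X) : FreeAssocAlg k X :=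
  MonoidAlgebra.single (FreeMonoid.ofList u) 1

/-- The coefficient of the word `u` in `f ∈ k⟨X⟩`. -/
def coeffW {k X : Type*} [Field k] (f : FreeAssocAlg k X) (u : List X) : k :=
  f.coeff (FreeMonoid.ofList u)

/-- `u` is the leading word of `f` with respect to the deg-lex order. -/
def IsLeadingWord {k X : Type*} [Field k] [LinearOrder X]
    (f : FreeAssocAlg k X) (u : List X) : Prop :=
  coeffW f u ≠ 0 ∧ ∀ w : List X, coeffW f w ≠ 0 → w = u ∨ DegLt w u

/-- `f` is monic: its leading coefficient is `1`. -/
def IsMonic {k X : Type*} [Field k] [LinearOrder X] (f : FreeAssocAlg k X) : Prop :=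
  ∃ u : List X, IsLeadingWord f u ∧ coeffW f u = 1

/-- The generator `x ∈ X` inside `k⟨X⟩`. -/
noncomputable def gen (k : Type*) [Field k] {X : Type*} (x : X) : FreeAssocAlg k X :=
  monom k [x]

attribute [local instance] LieRing.ofAssociativeRing

/-- The free Lie algebra `Lie(X)`: the Lie subalgebra of `k⟨X⟩` generated by `X`
under the commutator bracket. -/
noncomputable def LieX (k X : Type*) [Field k] : LieSubalgebra k (FreeAssocAlg k X) :=
  LieSubalgebra.lieSpan k _ (Set.range (gen k (X := X)))

/-- Evaluation of a non-associative word in `k⟨X⟩`, interpreting the binary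
operation as the commutator `(ab) = ab - ba`. -/
noncomputable def evalC {k X : Type*} [Field k] : FreeMagma X → FreeAssocAlg k X
  | .of x => gen k x
  | .mul a b => evalC a * evalC b - evalC b * evalC a

/-!
Induction along the standard bracketing `[u] = [[v][w]]`. In `k⟨X⟩` the leading word of a
product is the concatenation of the leading words (deg-lex is compatible with concatenation on
both sides), with product leading coefficient. Hence `[v][w]` has monic leading word `vw`, while
every word of `[w][v]` is `≤ wv`, which is strictly below `vw` because `u = vw` is an ALSW; so
the commutator keeps the leading term `vw` with coefficient `1`.
-/

namespace LSLt

variable {X : Type*} [LinearOrder X]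

lemma not_nil_left : ∀ v : List X, ¬ LSLt [] v
  | [], h => h
  | _ :: _, h => h

lemma irrefl : ∀ u : List X, ¬ LSLt u u
  | [] => not_nil_left _
  | a :: u => by
      rintro (h | ⟨-, h⟩)
      · exact lt_irrefl a h
      · exact irrefl u h

lemma trans : ∀ {u v w : List X}, LSLt u v → LSLt v w → LSLt u w
  | [], _, _, h, _ => absurd h (not_nil_left _)
  | _ :: _, [], _, _, h => absurd h (not_nil_left _)
  | _ :: _, _ :: _, [], _, _ => trivial
  | a :: u, b :: v, c :: w, h₁, h₂ => by
      rcases h₁ with h₁ | ⟨rfl, h₁⟩ <;> rcases h₂ with h₂ | ⟨rfl, h₂⟩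
      · exact Or.inl (h₁.trans h₂)
      · exact Or.inl h₁
      · exact Or.inl h₂
      · exact Or.inr ⟨rfl, trans h₁ h₂⟩

lemma append_of_length_eq : ∀ {a v : List X}, a.length = v.length → LSLt a v →
    ∀ b w : List X, LSLt (a ++ b) (v ++ w)
  | [], _, _, h, _, _ => absurd h (not_nil_left _)
  | _ :: _, [], hl, _, _, _ => by simp at hl
  | x :: a, y :: v, hl, h, b, w => by
      rcases h with h | ⟨rfl, h⟩
      · exact Or.inl h
      · exact Or.inr ⟨rfl, append_of_length_eq (by simpa using hl) h b w⟩

lemma append_left : ∀ (v : List X) {b w : List X}, LSLt b w → LSLt (v ++ b) (v ++ w)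
  | [], _, _, h => h
  | _ :: v, _, _, h => Or.inr ⟨rfl, append_left v h⟩

end LSLt

lemma List.append_inj_of_length_le {X : Type*} {a b v w : List X} (h : a ++ b = v ++ w)
    (ha : a.length ≤ v.length) (hb : b.length ≤ w.length) : a = v ∧ b = w := by
  have hl := congrArg List.length h
  simp only [List.length_append] at hl
  exact List.append_inj h (by omega)

section DegLex

variable {X : Type*} [LinearOrder X]

lemma DegLt.irrefl (u : List X) : ¬ DegLt u u := by
  rintro (h | ⟨-, h⟩)
  · exact lt_irrefl _ h
  · exact LSLt.irrefl u h

lemma DegLt.trans {u v w : List X} (h₁ : DegLt u v) (h₂ : DegLt v w) : DegLt u w := by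
  rcases h₁ with h₁ | ⟨e₁, h₁⟩ <;> rcases h₂ with h₂ | ⟨e₂, h₂⟩
  · exact Or.inl (h₁.trans h₂)
  · exact Or.inl (e₂ ▸ h₁)
  · exact Or.inl (e₁ ▸ h₂)
  · exact Or.inr ⟨e₁.trans e₂, h₁.trans h₂⟩

lemma DegLe.length_le {a v : List X} (h : DegLe a v) : a.length ≤ v.length := by
  rcases h with rfl | h | ⟨e, -⟩
  · exact le_rfl
  · exact h.le
  · exact e.le

lemma DegLe.append {a v b w : List X} (h₁ : DegLe a v) (h₂ : DegLe b w) :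
    DegLe (a ++ b) (v ++ w) := by
  have hb := h₂.length_le
  rcases h₁ with rfl | h₁ | ⟨e₁, h₁⟩
  · rcases h₂ with rfl | h₂ | ⟨e₂, h₂⟩
    · exact Or.inl rfl
    · exact Or.inr (Or.inl (by simp only [List.length_append]; omega))
    · exact Or.inr (Or.inr ⟨by simp [e₂], LSLt.append_left a h₂⟩)
  · exact Or.inr (Or.inl (by simp only [List.length_append]; omega))
  · rcases hb.lt_or_eq with hb | hb
    · exact Or.inr (Or.inl (by simp only [List.length_append]; omega))
    · exact Or.inr (Or.inr ⟨by simp only [List.length_append]; omega,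
        LSLt.append_of_length_eq e₁ h₁ b w⟩)

lemma IsALSW.degLt_swap {v w : List X} (h : IsALSW (v ++ w)) (hv : v ≠ []) (hw : w ≠ []) :
    DegLt (w ++ v) (v ++ w) :=
  Or.inr ⟨by simp only [List.length_append]; omega, h.2 v w hv hw rfl⟩

lemma LongestALSWProperSuffix.prefix_ne_nil {v w : List X}
    (h : LongestALSWProperSuffix (v ++ w) w) : v ≠ [] := by
  obtain ⟨v', hv', heq⟩ := h.2.1
  rwa [List.append_cancel_right heq]

end DegLex

section Coefficients

variable {k X : Type*} [Field k]

lemma evalC_mul (a b : FreeMagma X) :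
    evalC (k := k) (a * b) = evalC a * evalC b - evalC b * evalC a :=
  rfl

lemma coeffW_sub (f g : FreeAssocAlg k X) (u : List X) :
    coeffW (f - g) u = coeffW f u - coeffW g u := by
  simp [coeffW]

lemma exists_append_of_coeffW_mul_ne_zero {f g : FreeAssocAlg k X} {z : List X}
    (h : coeffW (f * g) z ≠ 0) :
    ∃ a b : List X, z = a ++ b ∧ coeffW f a ≠ 0 ∧ coeffW g b ≠ 0 := by
  classical
  rw [coeffW, MonoidAlgebra.coeff_mul] at h
  obtain ⟨a, ha, h⟩ := Finset.exists_ne_zero_of_sum_ne_zero h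
  obtain ⟨b, hb, h⟩ := Finset.exists_ne_zero_of_sum_ne_zero h
  rw [ite_ne_right_iff] at h
  exact ⟨a.toList, b.toList, congrArg FreeMonoid.toList h.1.symm,
    Finsupp.mem_support_iff.1 ha, Finsupp.mem_support_iff.1 hb⟩

lemma coeffW_mul_append_of_unique {f g : FreeAssocAlg k X} {v w : List X}
    (huniq : ∀ a b : List X, coeffW f a ≠ 0 → coeffW g b ≠ 0 → a ++ b = v ++ w → a = v ∧ b = w) :
    coeffW (f * g) (v ++ w) = coeffW f v * coeffW g w := by
  classical
  rw [coeffW, MonoidAlgebra.coeff_mul]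
  simp only [Finsupp.sum]
  rw [← Finset.sum_product',
    Finset.sum_eq_single (FreeMonoid.ofList v, FreeMonoid.ofList w)]
  · exact if_pos rfl
  · rintro ⟨a, b⟩ hab hne
    rw [ite_eq_right_iff]
    intro heq
    simp only [Finset.mem_product, Finsupp.mem_support_iff] at hab
    obtain ⟨rfl, rfl⟩ := huniq a.toList b.toList hab.1 hab.2 (congrArg FreeMonoid.toList heq)
    exact absurd rfl hne
  · intro hvw
    simp only [Finset.mem_product, Finsupp.mem_support_iff, not_and_or, not_not] at hvw
    rcases hvw with h | h <;> simp [h]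

lemma coeffW_monom_self (u : List X) : coeffW (monom k u) u = 1 := by
  simp [coeffW, monom]

lemma coeffW_monom_of_ne {u z : List X} (h : z ≠ u) : coeffW (monom k u) z = 0 := by
  classical
  rw [coeffW, monom, MonoidAlgebra.coeff_single, Finsupp.single_apply,
    if_neg fun e => h (FreeMonoid.ofList.injective e).symm]

end Coefficients

section LeadingWord

variable {k X : Type*} [Field k] [LinearOrder X] {f g : FreeAssocAlg k X} {u v w : List X}

lemma coeffW_eq_zero_of_forall_degLt (hg : ∀ z, coeffW g z ≠ 0 → DegLt z u) : coeffW g u = 0 :=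
  by_contra fun hu => DegLt.irrefl u (hg u hu)

lemma coeffW_sub_of_forall_degLt (hg : ∀ z, coeffW g z ≠ 0 → DegLt z u) :
    coeffW (f - g) u = coeffW f u := by
  rw [coeffW_sub, coeffW_eq_zero_of_forall_degLt hg, sub_zero]

lemma isLeadingWord_monom (u : List X) : IsLeadingWord (monom k u) u := by
  refine ⟨by simp [coeffW_monom_self], fun z hz => Or.inl ?_⟩
  by_contra h
  exact hz (coeffW_monom_of_ne h)

namespace IsLeadingWord

lemma degLe (hf : IsLeadingWord f u) {z : List X} (hz : coeffW f z ≠ 0) : DegLe z u :=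
  hf.2 z hz

lemma coeffW_mul (hf : IsLeadingWord f v) (hg : IsLeadingWord g w) :
    coeffW (f * g) (v ++ w) = coeffW f v * coeffW g w :=
  coeffW_mul_append_of_unique fun _ _ ha hb hab =>
    List.append_inj_of_length_le hab (hf.degLe ha).length_le (hg.degLe hb).length_le

lemma mul (hf : IsLeadingWord f v) (hg : IsLeadingWord g w) : IsLeadingWord (f * g) (v ++ w) := by
  refine ⟨by rw [hf.coeffW_mul hg]; exact mul_ne_zero hf.1 hg.1, fun z hz => ?_⟩
  obtain ⟨a, b, rfl, ha, hb⟩ := exists_append_of_coeffW_mul_ne_zero hz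
  exact (hf.degLe ha).append (hg.degLe hb)

lemma degLt_of_degLt (hg : IsLeadingWord g v) (hvu : DegLt v u) {z : List X}
    (hz : coeffW g z ≠ 0) : DegLt z u := by
  rcases hg.degLe hz with rfl | hzv
  · exact hvu
  · exact hzv.trans hvu

lemma sub_of_forall_degLt (hf : IsLeadingWord f u) (hg : ∀ z, coeffW g z ≠ 0 → DegLt z u) :
    IsLeadingWord (f - g) u := by
  refine ⟨by rw [coeffW_sub_of_forall_degLt hg]; exact hf.1, fun z hz => ?_⟩
  rw [coeffW_sub] at hz
  by_cases hfz : coeffW f z = 0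
  · exact Or.inr (hg z (by simpa [hfz] using hz))
  · exact hf.degLe hfz

end IsLeadingWord

end LeadingWord

/-- For every non-associative Lyndon–Shirshov word `[u]`
(the standard bracketing of an ALSW `u`), its interpretation in `k⟨X⟩` via the
commutator bracket has leading word `u` (deg-lex order) with leading
coefficient `1`. -/
theorem nlsw_leading_word {k X : Type*} [Field k] [LinearOrder X]
    (u : List X) (t : FreeMagma X) (ht : IsStdBracketing u t) :
    IsLeadingWord (evalC (k := k) t) u ∧ coeffW (evalC (k := k) t) u = 1 := by
  induction ht with
  | of x => exact ⟨isLeadingWord_monom [x], coeffW_monom_self [x]⟩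
  | @mul v w tv tw halsw hsuf _ _ ihv ihw =>
    have hswap : DegLt (w ++ v) (v ++ w) := halsw.degLt_swap hsuf.prefix_ne_nil hsuf.1.1
    have hlower : ∀ z, coeffW (evalC (k := k) tw * evalC tv) z ≠ 0 → DegLt z (v ++ w) :=
      fun _ => (ihw.1.mul ihv.1).degLt_of_degLt hswap
    rw [evalC_mul]
    refine ⟨(ihv.1.mul ihw.1).sub_of_forall_degLt hlower, ?_⟩
    rw [coeffW_sub_of_forall_degLt hlower, ihv.1.coeffW_mul ihw.1, ihv.2, ihw.2, one_mul]
end
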